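/- For the 'house chain' graph H_n (n ≥ 2), consisting of n inner faces as described (a fan-like partial Hamming graph with 2n+1 vertices whose quotients by Θ*-classes are complete graphs), the Gutman index satisfies Gut(H_n) = 6n³ + 9n² − 4n + 1. -/

import Mathlib

noncomputable section

/-- Vertex set of the house chain `Hₙ`: the apex `none = v₀` together with `uᵢ = (i, false)`
and `wᵢ = (i, true)` for `i = 1,…,n`; so `|V(Hₙ)| = 2n + 1`. -/
def HnV (n : ℕ) : Type := Option (Fin n × Bool)

instance (n : ℕ) : Fintype (HnV n) := by unfold HnV; infer_instance
instance (n : ℕ) : DecidableEq (HnV n) := by unfold HnV; infer_instance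

/-- The base relation generating the edges of `Hₙ`: the path `u₁ ⋯ uₙ`, the path `w₁ ⋯ wₙ`,
the rungs `uᵢwᵢ`, and the apex `v₀` adjacent to `u₁` and `w₁`; this gives the fan-like
partial Hamming graph with `n` inner faces. -/
def HnRel (n : ℕ) : HnV n → HnV n → Prop
  | none, some p => (p.1 : ℕ) = 0
  | some p, some q =>
      ((p.1 : ℕ) = (q.1 : ℕ) ∧ p.2 = false ∧ q.2 = true) ∨
      ((q.1 : ℕ) = (p.1 : ℕ) + 1 ∧ p.2 = q.2)
  | _, _ => False

/-- The house chain graph `Hₙ`, `n ≥ 2`. -/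
def Hn (n : ℕ) : SimpleGraph (HnV n) := SimpleGraph.fromRel (HnRel n)

/-- The degree of a vertex (as a real number). -/
noncomputable def SimpleGraph.degR {V : Type*} (G : SimpleGraph V) (u : V) : ℝ :=
  Nat.card {w : V | G.Adj u w}

/-- The Gutman index `Gut(G) = ∑_{{u,v}⊆V(G)} deg(u)deg(v) d(u,v)`. -/
noncomputable def SimpleGraph.gutmanIndex {V : Type*} [Fintype V] (G : SimpleGraph V) : ℝ :=
  (1 / 2) * ∑ u : V, ∑ v : V, (G.degR u * G.degR v) * (G.dist u v : ℝ)

/-!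
In `Hₙ` the apex `v₀` is at distance `i + 1` from both vertices of column `i`, and two vertices
in columns `i` and `j` are at distance `|i - j|`, plus one when they lie on different paths. The
degrees are `2` at the apex and in the last column and `3` elsewhere. Hence the Gutman index is a
weighted sum of `|i - j|` over `0 ≤ i, j < n`, evaluated with `∑ i, i = n(n - 1)/2` and
`∑ i, ∑ j, |i - j| = n(n² - 1)/3`.
-/

open SimpleGraph Finset

namespace SimpleGraph

variable {V : Type*} {G : SimpleGraph V} {D : V → V → ℕ}

theorem Walk.le_length_of_adj_le_succ (hD : ∀ x, D x x = 0)
    (hadj : ∀ ⦃x z⦄, G.Adj x z → ∀ y, D x y ≤ D z y + 1) {x y : V} (p : G.Walk x y) :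
    D x y ≤ p.length := by
  induction p with
  | nil => simp [hD]
  | cons h _ ih => grw [hadj h, ih, Walk.length_cons]

theorem exists_walk_length_eq_of_exists_adj_lt (hD : ∀ x, D x x = 0)
    (hadj : ∀ ⦃x z⦄, G.Adj x z → ∀ y, D x y ≤ D z y + 1)
    (hdesc : ∀ ⦃x y⦄, x ≠ y → ∃ z, G.Adj x z ∧ D z y < D x y) (x y : V) :
    ∃ p : G.Walk x y, p.length = D x y := by
  induction hk : D x y using Nat.strong_induction_on generalizing x with
  | _ k ih =>
    by_cases hxy : x = y
    · subst hxy
      exact ⟨.nil, by simp [← hk, hD]⟩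
    obtain ⟨z, hxz, hz⟩ := hdesc hxy
    obtain ⟨p, hp⟩ := ih _ (hk ▸ hz) z rfl
    have := hadj hxz y
    exact ⟨.cons hxz p, by rw [Walk.length_cons]; omega⟩

theorem dist_eq_of_adj_le_succ_of_exists_adj_lt (hD : ∀ x, D x x = 0)
    (hadj : ∀ ⦃x z⦄, G.Adj x z → ∀ y, D x y ≤ D z y + 1)
    (hdesc : ∀ ⦃x y⦄, x ≠ y → ∃ z, G.Adj x z ∧ D z y < D x y) (x y : V) :
    G.dist x y = D x y := by
  obtain ⟨p, hp⟩ := exists_walk_length_eq_of_exists_adj_lt hD hadj hdesc x y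
  obtain ⟨q, hq⟩ := Reachable.exists_walk_length_eq_dist ⟨p⟩
  exact le_antisymm (hp ▸ dist_le p) (hq ▸ q.le_length_of_adj_le_succ hD hadj)

end SimpleGraph

theorem sum_range_cast (n : ℕ) : ∑ i ∈ range n, (i : ℝ) = n * (n - 1) / 2 := by
  induction n with
  | zero => simp
  | succ n ih => rw [sum_range_succ, ih]; push_cast; ring

theorem sum_range_dist_left (m : ℕ) : ∑ j ∈ range m, (Nat.dist m j : ℝ) = m * (m + 1) / 2 :=
  calc ∑ j ∈ range m, (Nat.dist m j : ℝ) = ∑ j ∈ range m, (((m - 1 - j : ℕ) : ℝ) + 1) :=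
        sum_congr rfl fun j hj => by
          rw [mem_range] at hj
          rw [show Nat.dist m j = (m - 1 - j) + 1 by simp only [Nat.dist]; omega]
          push_cast; rfl
    _ = ∑ j ∈ range m, ((j : ℝ) + 1) := sum_range_reflect (fun j => (j : ℝ) + 1) m
    _ = m * (m + 1) / 2 := by rw [sum_add_distrib, sum_range_cast]; simp; ring

theorem sum_range_dist_right (m : ℕ) : ∑ j ∈ range m, (Nat.dist j m : ℝ) = m * (m + 1) / 2 := by
  simp only [Nat.dist_comm _ m, sum_range_dist_left]

theorem sum_range_sum_range_dist (n : ℕ) :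
    ∑ i ∈ range n, ∑ j ∈ range n, (Nat.dist i j : ℝ) = n * (n ^ 2 - 1) / 3 := by
  induction n with
  | zero => simp
  | succ m ih =>
    simp only [sum_range_succ, sum_add_distrib, ih, sum_range_dist_left, sum_range_dist_right,
      Nat.dist_self]
    push_cast; ring

theorem sum_range_succ_ite_lt_mul (n : ℕ) (a b : ℝ) (g : ℕ → ℝ) :
    ∑ i ∈ range (n + 1), (if i < n then a else b) * g i = a * ∑ i ∈ range n, g i + b * g n := by
  rw [sum_range_succ, if_neg (lt_irrefl n), mul_sum]
  congr 1
  exact sum_congr rfl fun i hi => by rw [if_pos (mem_range.1 hi)]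

/-- The leading term counts the apex, which is a neighbour of column `0` only. -/
theorem sum_range_ite_dist_le_one {i n : ℕ} (hi : i < n) :
    (if i = 0 then 1 else 0) + ∑ j ∈ range n,
      ((if Nat.dist i j = 1 then (1 : ℝ) else 0) + if Nat.dist i j = 0 then 1 else 0) =
      if i + 1 < n then 3 else 2 := by
  have hsplit : ∀ j, (if Nat.dist i j = 1 then (1 : ℝ) else 0) +
      (if Nat.dist i j = 0 then 1 else 0) =
      (if i = j + 1 then 1 else 0) + (if i + 1 = j then 1 else 0) + if i = j then 1 else 0 :=
    fun j => by
      have hd1 : Nat.dist i j = 1 ↔ i = j + 1 ∨ i + 1 = j := by unfold Nat.dist; omega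
      have hd0 : Nat.dist i j = 0 ↔ i = j := by unfold Nat.dist; omega
      simp only [hd1, hd0]
      split_ifs <;> first | omega | norm_num
  have hback : (if i = 0 then 1 else 0) + ∑ j ∈ range n, (if i = j + 1 then (1 : ℝ) else 0) = 1 := by
    rw [add_comm, ← sum_range_succ' (fun j => if i = j then (1 : ℝ) else 0) n, sum_ite_eq,
      if_pos (mem_range.2 (by omega))]
  simp only [hsplit, sum_add_distrib, ← add_assoc, hback, sum_ite_eq, mem_range, if_pos hi]
  split_ifs <;> norm_num

theorem sum_range_column_weights_eq (m : ℕ) :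
    ∑ i ∈ range (m + 1), (if i + 1 < m + 1 then 3 else 2) * (8 * ((i : ℝ) + 1) +
        ∑ j ∈ range (m + 1), (if j + 1 < m + 1 then 3 else 2) * (4 * (Nat.dist i j : ℝ) + 2)) =
      2 * (6 * ((m : ℝ) + 1) ^ 3 + 9 * ((m : ℝ) + 1) ^ 2 - 4 * ((m : ℝ) + 1) + 1) := by
  simp only [Nat.add_lt_add_iff_right, sum_range_succ_ite_lt_mul, sum_add_distrib, mul_add,
    ← mul_sum, sum_const, card_range, nsmul_eq_mul, sum_range_cast, sum_range_sum_range_dist,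
    sum_range_dist_left, sum_range_dist_right, Nat.dist_self]
  push_cast
  ring

-- Unfolding the type synonym `HnV` lets `simp` decide equalities of vertices; `instFintypeHnV` is
-- registered again so that it stays the instance found for sums over `HnV n`.
attribute [reducible] HnV

attribute [instance] instFintypeHnV

namespace Hn

variable {n : ℕ}

def distFormula : HnV n → HnV n → ℕ
  | none, none => 0
  | none, some p | some p, none => p.1 + 1
  | some p, some q => Nat.dist p.1 q.1 + if p.2 = q.2 then 0 else 1

@[simp] theorem distFormula_none_some (i : Fin n) (b : Bool) :
    distFormula none (some (i, b)) = i + 1 := rfl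

@[simp] theorem distFormula_some_none (i : Fin n) (b : Bool) :
    distFormula (some (i, b)) none = i + 1 := rfl

@[simp] theorem distFormula_some_some (i j : Fin n) (b c : Bool) :
    distFormula (some (i, b)) (some (j, c)) = Nat.dist i j + if b = c then 0 else 1 := rfl

@[simp] theorem distFormula_self (x : HnV n) : distFormula x x = 0 := by
  rcases x with _ | ⟨i, b⟩ <;> simp [distFormula]

theorem distFormula_triangle (x y z : HnV n) :
    distFormula x z ≤ distFormula x y + distFormula y z := by
  rcases x with _ | ⟨i, b⟩ <;> rcases y with _ | ⟨j, c⟩ <;> rcases z with _ | ⟨k, d⟩ <;>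
    simp only [distFormula, Nat.dist] <;> (try split_ifs) <;> simp_all <;> omega

theorem adj_iff_distFormula_eq_one {x y : HnV n} : (Hn n).Adj x y ↔ distFormula x y = 1 := by
  rw [Hn, fromRel_adj]
  rcases x with _ | ⟨i, b⟩ <;> rcases y with _ | ⟨j, c⟩ <;>
    simp [HnRel, distFormula, Nat.dist, Fin.ext_iff]
  cases b <;> cases c <;> simp <;> omega

theorem distFormula_le_succ_of_adj ⦃x z : HnV n⦄ (h : (Hn n).Adj x z) (y : HnV n) :
    distFormula x y ≤ distFormula z y + 1 :=
  (distFormula_triangle x z y).trans_eq (by rw [adj_iff_distFormula_eq_one.1 h, add_comm])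

theorem exists_adj_distFormula_lt ⦃x y : HnV n⦄ (h : x ≠ y) :
    ∃ z, (Hn n).Adj x z ∧ distFormula z y < distFormula x y := by
  simp only [adj_iff_distFormula_eq_one]
  rcases x with _ | ⟨i, b⟩ <;> rcases y with _ | ⟨j, c⟩
  · exact absurd rfl h
  · exact ⟨some (⟨0, j.pos⟩, c), by simp [Nat.dist]⟩
  · rcases Nat.eq_zero_or_pos i with hi | hi
    · exact ⟨none, by simp [hi]⟩
    · exact ⟨some (⟨i - 1, by omega⟩, b), by simp [Nat.dist]; omega⟩
  · rcases lt_trichotomy (i : ℕ) j with hij | hij | hij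
    · exact ⟨some (⟨i + 1, by omega⟩, b), by simp [Nat.dist]; omega⟩
    · obtain rfl := Fin.ext hij
      have hbc : b ≠ c := fun hbc => h (by rw [hbc])
      exact ⟨some (i, c), by simp [hbc]⟩
    · exact ⟨some (⟨i - 1, by omega⟩, b), by simp [Nat.dist]; omega⟩

theorem dist_eq_distFormula (x y : HnV n) : (Hn n).dist x y = distFormula x y :=
  dist_eq_of_adj_le_succ_of_exists_adj_lt distFormula_self distFormula_le_succ_of_adj
    exists_adj_distFormula_lt x y

theorem sum_univ {M : Type*} [AddCommMonoid M] (g : HnV n → M) :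
    ∑ x, g x = g none + ∑ i : Fin n, ∑ b : Bool, g (some (i, b)) := by
  rw [← Fintype.sum_prod_type']
  exact Fintype.sum_option g

theorem degR_eq_sum_ite (x : HnV n) :
    (Hn n).degR x = ∑ y, if distFormula x y = 1 then (1 : ℝ) else 0 := by
  simp only [degR, adj_iff_distFormula_eq_one, Nat.card_coe_set_eq, Set.ncard_eq_toFinset_card',
    Set.toFinset_ofPred]
  rw [sum_boole]

theorem degR_none (hn : 0 < n) : (Hn n).degR none = 2 := by
  rw [degR_eq_sum_ite, sum_univ]
  simp only [distFormula_self, distFormula_none_some, Fintype.sum_bool, zero_ne_one, if_false,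
    add_eq_right, zero_add]
  rw [Fin.sum_univ_eq_sum_range (fun i => (if i = 0 then (1 : ℝ) else 0) + if i = 0 then 1 else 0),
    sum_add_distrib, sum_ite_eq', if_pos (mem_range.2 hn)]
  norm_num

theorem sum_bool_ite_distFormula_eq_one (i j : Fin n) (b : Bool) :
    ∑ c : Bool, (if distFormula (some (i, b)) (some (j, c)) = 1 then (1 : ℝ) else 0) =
      (if Nat.dist i j = 1 then 1 else 0) + if Nat.dist i j = 0 then 1 else 0 := by
  cases b <;> rcases h : Nat.dist i j with _ | _ | d <;> simp [h]

theorem degR_some (i : Fin n) (b : Bool) :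
    (Hn n).degR (some (i, b)) = if (i : ℕ) + 1 < n then 3 else 2 := by
  rw [degR_eq_sum_ite, sum_univ, ← sum_range_ite_dist_le_one i.2, ← Fin.sum_univ_eq_sum_range
    (fun j => (if Nat.dist i j = 1 then (1 : ℝ) else 0) + if Nat.dist i j = 0 then 1 else 0)]
  congr 1
  · simp
  · exact sum_congr rfl fun j _ => sum_bool_ite_distFormula_eq_one i j b

theorem sum_sum_degR_mul_dist (hn : 0 < n) :
    ∑ x, ∑ y, (Hn n).degR x * (Hn n).degR y * ((Hn n).dist x y : ℝ) =
      ∑ i ∈ range n, (if i + 1 < n then 3 else 2) * (8 * ((i : ℝ) + 1) +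
        ∑ j ∈ range n, (if j + 1 < n then 3 else 2) * (4 * (Nat.dist i j : ℝ) + 2)) := by
  simp only [dist_eq_distFormula, sum_univ, degR_none hn, degR_some, distFormula_self,
    distFormula_none_some, distFormula_some_none, distFormula_some_some, Fintype.sum_bool,
    Bool.true_eq_false, Bool.false_eq_true, ↓reduceIte, Nat.cast_add, Nat.cast_zero, Nat.cast_one,
    add_zero, mul_zero, zero_add, sum_range, ← sum_add_distrib]
  refine sum_congr rfl fun i _ => ?_
  rw [show ∀ a b c d : ℝ, a + a + (b + c + (b + d)) = 2 * a + 2 * b + (c + d) by intros; ring,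
    ← sum_add_distrib, mul_add _ (8 * _), mul_sum]
  congr 1
  · ring
  · exact sum_congr rfl fun j _ => by ring

end Hn

/-- For the house chain `Hₙ` (`n ≥ 2`),
`Gut(Hₙ) = 6n³ + 9n² − 4n + 1`. -/
theorem gutmanIndex_Hn (n : ℕ) (hn : 2 ≤ n) :
    (Hn n).gutmanIndex = 6 * (n : ℝ) ^ 3 + 9 * (n : ℝ) ^ 2 - 4 * (n : ℝ) + 1 := by
  obtain ⟨m, rfl⟩ : ∃ m, n = m + 1 := ⟨n - 1, by omega⟩
  rw [gutmanIndex, Hn.sum_sum_degR_mul_dist m.succ_pos, sum_range_column_weights_eq]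
  push_cast
  ring

end
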